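/- arXiv:1912.12610 — 2 statements merged into one kernel-verified Lean document; each statement's English description precedes it below -/
import Mathlib

section
/- For every cooperative game v on a finite set A and every player a ∈ A, the Shapley value admits the subset formula: Shapley(A, v, a) = ∑_{S ⊆ A \ {a}} (|S|! · (|A| − |S| − 1)!) / |A|! · (v(S ∪ {a}) − v(S)). -/
open scoped Classical

noncomputable def before {α : Type*} [Fintype α] (σ : Fin (Fintype.card α) ≃ α) (a : α) :
    Finset α :=
  Finset.univ.filter (fun b => σ.symm b < σ.symm a)

noncomputable def shapley {α : Type*} [Fintype α] [DecidableEq α] (v : Finset α → ℝ) (a : α) :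
    ℝ :=
  (1 / (Fintype.card α).factorial) *
    ∑ σ : Fin (Fintype.card α) ≃ α, (v (insert a (before σ a)) - v (before σ a))

section Aux

variable {α : Type*} [Fintype α] [DecidableEq α]

private noncomputable def buildFun (a : α) (S : Finset α)
    (f : Fin S.card ≃ {x // x ∈ S})
    (g : Fin (Fintype.card α - S.card - 1) ≃
      {x // x ∈ (Finset.univ \ insert a S : Finset α)})
    (i : Fin (Fintype.card α)) : α :=
  if h : (i : ℕ) < S.card then (f ⟨i, h⟩ : α)
  else if h2 : (i : ℕ) = S.card then a
  else (g ⟨(i : ℕ) - S.card - 1, by have := i.isLt; omega⟩ : α)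

variable {a : α} {S : Finset α}
  {f : Fin S.card ≃ {x // x ∈ S}}
  {g : Fin (Fintype.card α - S.card - 1) ≃
    {x // x ∈ (Finset.univ \ insert a S : Finset α)}}

private lemma buildFun_lt {i : Fin (Fintype.card α)} (h : (i : ℕ) < S.card) :
    buildFun a S f g i = (f ⟨i, h⟩ : α) := by
  rw [buildFun, dif_pos h]

private lemma buildFun_eq {i : Fin (Fintype.card α)} (h : (i : ℕ) = S.card) :
    buildFun a S f g i = a := by
  rw [buildFun, dif_neg (by omega), dif_pos h]

private lemma buildFun_gt {i : Fin (Fintype.card α)} (h : S.card < (i : ℕ)) :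
    buildFun a S f g i =
      (g ⟨(i : ℕ) - S.card - 1, by have := i.isLt; omega⟩ : α) := by
  rw [buildFun, dif_neg (by omega), dif_neg (by omega)]

private lemma notmem_of_mem_sdiff {b : α} (hb : b ∈ (Finset.univ \ insert a S : Finset α)) :
    b ≠ a ∧ b ∉ S := by
  rw [Finset.mem_sdiff, Finset.mem_insert, not_or] at hb
  exact hb.2

private lemma buildFun_injective (ha : a ∉ S) : Function.Injective (buildFun a S f g) := by
  intro i j hij
  rcases Nat.lt_trichotomy (i : ℕ) S.card with h1 | h1 | h1 <;>
    rcases Nat.lt_trichotomy (j : ℕ) S.card with h2 | h2 | h2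
  · rw [buildFun_lt h1, buildFun_lt h2] at hij
    have := f.injective (Subtype.ext hij)
    have h3 := congrArg Fin.val this
    exact Fin.ext h3
  · rw [buildFun_lt h1, buildFun_eq h2] at hij
    exact absurd (hij ▸ (f ⟨i, h1⟩).2) ha
  · rw [buildFun_lt h1, buildFun_gt h2] at hij
    exact absurd (hij ▸ (f ⟨i, h1⟩).2) (notmem_of_mem_sdiff (g _).2).2
  · rw [buildFun_eq h1, buildFun_lt h2] at hij
    exact absurd (hij ▸ (f ⟨j, h2⟩).2) ha
  · exact Fin.ext (h1.trans h2.symm)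
  · rw [buildFun_eq h1, buildFun_gt h2] at hij
    exact absurd hij.symm (notmem_of_mem_sdiff (g _).2).1
  · rw [buildFun_gt h1, buildFun_lt h2] at hij
    exact absurd (hij ▸ (f ⟨j, h2⟩).2) (notmem_of_mem_sdiff (g _).2).2
  · rw [buildFun_gt h1, buildFun_eq h2] at hij
    exact absurd hij (notmem_of_mem_sdiff (g _).2).1
  · rw [buildFun_gt h1, buildFun_gt h2] at hij
    have := g.injective (Subtype.ext hij)
    have := congrArg Fin.val this
    simp only at this
    exact Fin.ext (by omega)

private noncomputable def buildEquiv (a : α) (S : Finset α) (ha : a ∉ S)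
    (f : Fin S.card ≃ {x // x ∈ S})
    (g : Fin (Fintype.card α - S.card - 1) ≃
      {x // x ∈ (Finset.univ \ insert a S : Finset α)}) :
    Fin (Fintype.card α) ≃ α :=
  Equiv.ofBijective (buildFun a S f g)
    ((Fintype.bijective_iff_injective_and_card _).2 ⟨buildFun_injective ha, by simp⟩)

private lemma buildEquiv_apply (ha : a ∉ S) (i : Fin (Fintype.card α)) :
    buildEquiv a S ha f g i = buildFun a S f g i := rfl

private lemma before_buildEquiv (ha : a ∉ S) (hk : S.card < Fintype.card α) :
    before (buildEquiv a S ha f g) a = S := by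
  have hsa : (buildEquiv a S ha f g).symm a = ⟨S.card, hk⟩ := by
    rw [Equiv.symm_apply_eq, buildEquiv_apply, buildFun_eq rfl]
  ext b
  simp only [before, Finset.mem_filter, Finset.mem_univ, true_and, hsa, Fin.lt_def]
  constructor
  · intro h
    have hb : buildEquiv a S ha f g ((buildEquiv a S ha f g).symm b)
        = (f ⟨(buildEquiv a S ha f g).symm b, h⟩ : α) := by
      rw [buildEquiv_apply, buildFun_lt h]
    rw [Equiv.apply_symm_apply] at hb
    rw [hb]
    exact (f _).2
  · intro hb
    have hlt : ((f.symm ⟨b, hb⟩ : Fin _) : ℕ) < Fintype.card α :=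
      lt_trans (f.symm ⟨b, hb⟩).isLt hk
    have : (buildEquiv a S ha f g).symm b = ⟨(f.symm ⟨b, hb⟩ : Fin _), hlt⟩ := by
      rw [Equiv.symm_apply_eq, buildEquiv_apply, buildFun_lt (f.symm ⟨b, hb⟩).isLt]
      rw [Fin.eta, Equiv.apply_symm_apply]
    rw [this]
    exact (f.symm ⟨b, hb⟩).isLt

private lemma count_fiber (a : α) (S : Finset α) (hS : S ⊆ Finset.univ.erase a) :
    (Finset.univ.filter fun σ : Fin (Fintype.card α) ≃ α => before σ a = S).card
      = S.card.factorial * (Fintype.card α - S.card - 1).factorial := by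
  have ha : a ∉ S := fun h => (Finset.mem_erase.1 (hS h)).1 rfl
  have hn : 0 < Fintype.card α := Fintype.card_pos_iff.2 ⟨a⟩
  have hkle : S.card ≤ Fintype.card α - 1 := by
    calc S.card ≤ (Finset.univ.erase a).card := Finset.card_le_card hS
    _ = Fintype.card α - 1 := by
        rw [Finset.card_erase_of_mem (Finset.mem_univ a), Finset.card_univ]
  have hk : S.card < Fintype.card α := by omega
  have hT : (Finset.univ \ insert a S : Finset α).card = Fintype.card α - S.card - 1 := by
    rw [Finset.card_sdiff_of_subset (Finset.subset_univ _), Finset.card_univ,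
      Finset.card_insert_of_notMem ha]
    omega
  rw [← Fintype.card_subtype]
  set Φ : ((Fin S.card ≃ {x // x ∈ S}) ×
      (Fin (Fintype.card α - S.card - 1) ≃
        {x // x ∈ (Finset.univ \ insert a S : Finset α)})) →
      {σ : Fin (Fintype.card α) ≃ α // before σ a = S} :=
    fun p => ⟨buildEquiv a S ha p.1 p.2, before_buildEquiv ha hk⟩ with hΦ
  have hbij : Function.Bijective Φ := by
    constructor
    · rintro ⟨f, g⟩ ⟨f', g'⟩ h
      have h' : buildEquiv a S ha f g = buildEquiv a S ha f' g' :=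
        congrArg Subtype.val h
      have happ : ∀ i, buildFun a S f g i = buildFun a S f' g' i := by
        intro i
        rw [← buildEquiv_apply ha, ← buildEquiv_apply ha, h']
      refine Prod.ext ?_ ?_
      · apply Equiv.ext; intro i
        have := happ ⟨i, lt_trans i.isLt hk⟩
        rw [buildFun_lt i.isLt, buildFun_lt i.isLt] at this
        apply Subtype.ext
        simpa [Fin.eta] using this
      · apply Equiv.ext; intro i
        have hlt : S.card < (i : ℕ) + S.card + 1 := by omega
        have hlt2 : (i : ℕ) + S.card + 1 < Fintype.card α := by have := i.isLt; omega
        have := happ ⟨(i : ℕ) + S.card + 1, hlt2⟩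
        rw [buildFun_gt hlt, buildFun_gt hlt] at this
        apply Subtype.ext
        have hieq : (⟨(i : ℕ) + S.card + 1 - S.card - 1, by have := i.isLt; omega⟩ :
            Fin (Fintype.card α - S.card - 1)) = i := by apply Fin.ext; simp; omega
        rw [hieq] at this
        exact this
    · rintro ⟨σ, hσ⟩
      have hcard : (before σ a).card = ((σ.symm a : Fin _) : ℕ) := by
        have himg : before σ a = (Finset.Iio (σ.symm a)).map σ.toEmbedding := by
          ext b
          simp only [before, Finset.mem_filter, Finset.mem_univ, true_and, Finset.mem_map,
            Finset.mem_Iio, Equiv.coe_toEmbedding]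
          constructor
          · intro h; exact ⟨σ.symm b, h, σ.apply_symm_apply b⟩
          · rintro ⟨i, hi, rfl⟩; simpa using hi
        rw [himg, Finset.card_map, Fin.card_Iio]
      have hsa : σ.symm a = ⟨S.card, hk⟩ := by
        apply Fin.ext
        rw [← hcard, hσ]
      have hmem : ∀ b, b ∈ S ↔ ((σ.symm b : Fin _) : ℕ) < S.card := by
        intro b
        conv_lhs => rw [← hσ]
        simp [before, hsa, Fin.lt_def]
      have hf0 : ∀ i : Fin S.card, σ ⟨i, lt_trans i.isLt hk⟩ ∈ S := by
        intro i
        rw [hmem, Equiv.symm_apply_apply]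
        exact i.isLt
      set f0 : Fin S.card → {x // x ∈ S} :=
        fun i => ⟨σ ⟨i, lt_trans i.isLt hk⟩, hf0 i⟩ with hf0def
      have hf0inj : Function.Injective f0 := by
        intro i j h
        have := σ.injective (congrArg Subtype.val h)
        have h3 := congrArg Fin.val this
        exact Fin.ext h3
      have hf0bij : Function.Bijective f0 :=
        (Fintype.bijective_iff_injective_and_card f0).2 ⟨hf0inj, by simp⟩
      set f := Equiv.ofBijective f0 hf0bij with hfdef
      have hg0lt : ∀ j : Fin (Fintype.card α - S.card - 1),
          (j : ℕ) + S.card + 1 < Fintype.card α := by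
        intro j; have := j.isLt; omega
      have hg0 : ∀ j : Fin (Fintype.card α - S.card - 1),
          σ ⟨(j : ℕ) + S.card + 1, hg0lt j⟩ ∈ (Finset.univ \ insert a S : Finset α) := by
        intro j
        rw [Finset.mem_sdiff, Finset.mem_insert]
        refine ⟨Finset.mem_univ _, ?_⟩
        push_neg
        constructor
        · intro h
          have heq : σ.symm a = ⟨(j : ℕ) + S.card + 1, hg0lt j⟩ := by
            rw [← h, Equiv.symm_apply_apply]
          rw [hsa] at heq
          have hv2 : S.card = (j : ℕ) + S.card + 1 := congrArg Fin.val heq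
          omega
        · intro h
          rw [hmem, Equiv.symm_apply_apply] at h
          have hv2 : (j : ℕ) + S.card + 1 < S.card := h
          omega
      set g0 : Fin (Fintype.card α - S.card - 1) →
          {x // x ∈ (Finset.univ \ insert a S : Finset α)} :=
        fun j => ⟨σ ⟨(j : ℕ) + S.card + 1, hg0lt j⟩, hg0 j⟩ with hg0def
      have hg0inj : Function.Injective g0 := by
        intro i j h
        have h1 := σ.injective (congrArg Subtype.val h)
        have h2 := congrArg Fin.val h1
        simp only [] at h2
        exact Fin.ext (by omega)
      have hg0bij : Function.Bijective g0 :=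
        (Fintype.bijective_iff_injective_and_card g0).2 ⟨hg0inj, by rw [Fintype.card_fin, Fintype.card_coe, hT]⟩
      set g := Equiv.ofBijective g0 hg0bij with hgdef
      refine ⟨⟨f, g⟩, ?_⟩
      apply Subtype.ext
      show buildEquiv a S ha f g = σ
      apply Equiv.ext
      intro i
      rw [buildEquiv_apply]
      rcases Nat.lt_trichotomy (i : ℕ) S.card with h | h | h
      · rw [buildFun_lt h]
        show (f0 ⟨i, h⟩ : α) = σ i
        simp only [hf0def]
      · rw [buildFun_eq h]
        have : σ ⟨S.card, hk⟩ = a := by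
          conv_rhs => rw [← σ.apply_symm_apply a, hsa]
        rw [← this]
        exact congrArg σ (Fin.ext h.symm)
      · rw [buildFun_gt h]
        show (g0 _ : α) = σ i
        simp only [hg0def]
        refine congrArg σ (Fin.ext ?_)
        simp only []
        show (i : ℕ) - S.card - 1 + S.card + 1 = (i : ℕ)
        omega
  rw [← Fintype.card_of_bijective hbij, Fintype.card_prod,
    Fintype.card_equiv (Fintype.equivFinOfCardEq
      (by simp : Fintype.card {x // x ∈ S} = S.card)).symm,
    Fintype.card_equiv (Fintype.equivFinOfCardEq (by rw [Fintype.card_coe, hT] :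
      Fintype.card {x // x ∈ (Finset.univ \ insert a S : Finset α)}
        = Fintype.card α - S.card - 1)).symm,
    Fintype.card_fin, Fintype.card_fin]

private lemma before_mem_powerset (σ : Fin (Fintype.card α) ≃ α) (a : α) :
    before σ a ∈ (Finset.univ.erase a).powerset := by
  rw [Finset.mem_powerset]
  intro b hb
  rw [before, Finset.mem_filter] at hb
  refine Finset.mem_erase.2 ⟨fun h => ?_, Finset.mem_univ b⟩
  subst h
  exact lt_irrefl _ hb.2

end Aux

theorem shapley_subset_formula {α : Type*} [Fintype α] [DecidableEq α] [Nonempty α]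
    (v : Finset α → ℝ) (hv : v ∅ = 0) (a : α) :
    shapley v a =
      ∑ S ∈ (Finset.univ.erase a).powerset,
        ((S.card.factorial * (Fintype.card α - S.card - 1).factorial : ℝ) /
          (Fintype.card α).factorial) * (v (insert a S) - v S) := by
  rw [shapley,
    ← Finset.sum_fiberwise_of_maps_to' (fun σ _ => before_mem_powerset σ a)
      (fun S => v (insert a S) - v S),
    Finset.mul_sum]
  apply Finset.sum_congr rfl
  intro S hS
  rw [Finset.sum_const, count_fiber a S (Finset.mem_powerset.1 hS), nsmul_eq_mul]
  push_cast
  ring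
end

section
/- Let q be a finite set of atoms, each atom α having a finite set Vars(α) of variables and a polarity (positive or negative), satisfying safety: every variable occurring in a negative atom also occurs in some positive atom. For a variable x, let A_x be the set of atoms containing x. Suppose q is non-hierarchical: there exist variables x, y with A_x ⊄ A_y, A_y ⊄ A_x, and A_x ∩ A_y ≠ ∅. Then there exist variables x', y' and atoms α_{x'} ∈ A_{x'} \ A_{y'}, α_{y'} ∈ A_{y'} \ A_{x'}, α_{x'y'} ∈ A_{x'} ∩ A_{y'} such that: if exactly two of the three atoms α_{x'}, α_{y'}, α_{x'y'} are negative, then the two negative ones are α_{x'} and α_{y'}. -/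
theorem nonhierarchical_triplet_choice {ι V : Type*} [Fintype ι] [DecidableEq V]
    (vars : ι → Finset V) (pos : ι → Bool)
    (hsafe : ∀ a : ι, pos a = false → ∀ x ∈ vars a, ∃ b : ι, pos b = true ∧ x ∈ vars b)
    (x y : V)
    (hx : ¬ ∀ a : ι, x ∈ vars a → y ∈ vars a)
    (hy : ¬ ∀ a : ι, y ∈ vars a → x ∈ vars a)
    (hxy : ∃ a : ι, x ∈ vars a ∧ y ∈ vars a) :
    ∃ (x' y' : V) (ax ay axy : ι),
      x' ∈ vars ax ∧ y' ∉ vars ax ∧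
      y' ∈ vars ay ∧ x' ∉ vars ay ∧
      x' ∈ vars axy ∧ y' ∈ vars axy ∧
      (((if pos ax then 0 else 1) + (if pos ay then 0 else 1) +
          (if pos axy then 0 else 1) = (2 : ℕ)) →
        (pos ax = false ∧ pos ay = false ∧ pos axy = true)) := by
  push_neg at hx hy
  obtain ⟨ax, hxax, hyax⟩ := hx
  obtain ⟨ay, hyay, hxay⟩ := hy
  obtain ⟨axy, hxaxy, hyaxy⟩ := hxy
  by_cases hp : pos axy = true
  · refine ⟨x, y, ax, ay, axy, hxax, hyax, hyay, hxay, hxaxy, hyaxy, ?_⟩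
    cases hax : pos ax <;> cases hay : pos ay <;> simp [hp, hax, hay]
  · rw [Bool.not_eq_true] at hp
    obtain ⟨b, hbpos, hxb⟩ := hsafe axy hp x hxaxy
    obtain ⟨c, hcpos, hyc⟩ := hsafe axy hp y hyaxy
    by_cases hyb : y ∈ vars b
    · refine ⟨x, y, ax, ay, b, hxax, hyax, hyay, hxay, hxb, hyb, ?_⟩
      cases hax : pos ax <;> cases hay : pos ay <;> simp [hbpos, hax, hay]
    · by_cases hxc : x ∈ vars c
      · refine ⟨x, y, ax, ay, c, hxax, hyax, hyay, hxay, hxc, hyc, ?_⟩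
        cases hax : pos ax <;> cases hay : pos ay <;> simp [hcpos, hax, hay]
      · refine ⟨x, y, b, c, axy, hxb, hyb, hyc, hxc, hxaxy, hyaxy, ?_⟩
        simp [hbpos, hcpos, hp]
end
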